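/- Let a_n be the number of words of length n in N_fin(p) (words over {x_0^{±1}, …, x_{p-1}^{±1}} of length n with no forbidden subword). Then the following identity of formal power series in ℚ[[t]] holds: (∑_{n≥0} a_n t^n) · (1 − t) · ((1 − t)^p + (1 − t)^{p−1} − 1) = (1 + t) · (1 − t·(1 − t)^{p−1}). -/

import Mathlib

open PowerSeries

/-- The forbidden subwords (1)–(5). -/
def Forbidden (p : ℕ) (u : List (ℕ × Bool)) : Prop :=
  (∃ (i : ℕ) (ε : Bool), i ≤ p - 1 ∧ u = [(i, ε), (i, !ε)]) ∨
  (∃ (α β k : ℕ) (ε : Bool), 1 ≤ β ∧ β < α ∧ α ≤ p - 1 ∧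
    u = (α, ε) :: (List.replicate k ((0 : ℕ), true) ++ [(β, true)])) ∨
  (∃ (α β k : ℕ) (ε : Bool), 1 ≤ β ∧ β < α ∧ α ≤ p - 1 ∧
    u = (α, ε) :: (List.replicate (k + 1) ((0 : ℕ), true) ++ [(β, false)])) ∨
  (∃ (α β k : ℕ) (ε : Bool), 1 ≤ α ∧ α ≤ β ∧ β ≤ p - 1 ∧
    u = (α, ε) :: (List.replicate (k + 1) ((0 : ℕ), true) ++ [(β, true)])) ∨
  (∃ (α β k : ℕ) (ε : Bool), 1 ≤ α ∧ α ≤ β ∧ β ≤ p - 1 ∧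
    u = (α, ε) :: (List.replicate (k + 2) ((0 : ℕ), true) ++ [(β, false)]))

/-- `N_fin(p)`: words over `x_0^{±1}, …, x_{p−1}^{±1}` with no forbidden
subword. -/
def NFin (p : ℕ) (w : List (ℕ × Bool)) : Prop :=
  (∀ a ∈ w, a.1 ≤ p - 1) ∧ ∀ u, u <:+: w → ¬ Forbidden p u

/-!
Whether a letter can be appended to a word of `N_fin(p)` depends only on the word's ending: its
last letter other than `x₀ = x_0^{+1}` and the number of letters `x₀` after it (`Blocks`). Sorting
the words by ending turns the count into a linear system for generating functions: `Z` for the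
words `x₀^k` with `k ≥ 1`, `Zb` for words ending in `x_0^{-1}`, `B c` and `G c` for words ending in
`x_a^{±1}` resp. `x_a^{±1} x₀` with `1 ≤ a ≤ c`, and `H` for words ending in `x_a^{±1} x₀^k` with
`k ≥ 2`. The equations for the `B c` form a recursion in `c`, which by induction gives
`(1 + t) (1 - t)^c B c = t (2 (1 + Z + Zb) + B (p - 1)) ∑_{j < c} (1 - t)^j`;
eliminating the other unknowns gives the identity.
-/

section TransferEquations

variable {R : Type*} [CommRing R] {x W : R} {m : ℕ} {B G : ℕ → R}

theorem one_add_mul_one_sub_pow_mul_eq_mul_geom_sum (hB0 : B 0 = 0) (hG : ∀ c, G c = x * B c)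
    (hB : ∀ a < m, B (a + 1) = B a + x * (2 * W + B a + B m + G (a + 1))) :
    ∀ a ≤ m, (1 + x) * (1 - x) ^ a * B a = x * (2 * W + B m) * ∑ j ∈ Finset.range a, (1 - x) ^ j
  | 0, _ => by simp [hB0]
  | a + 1, ha => by
    rw [Finset.sum_range_succ]
    linear_combination one_add_mul_one_sub_pow_mul_eq_mul_geom_sum hB0 hG hB a (by omega) +
      (1 - x) ^ a * hB a (by omega) + x * (1 - x) ^ a * hG (a + 1)

theorem transfer_equations_solution {Z Zb H T : R} (hZ : Z = x * (1 + Z))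
    (hZb : Zb = x * (1 + Zb + B m)) (hG : ∀ c, G c = x * B c) (hH : H = x * (G m + H))
    (hB0 : B 0 = 0)
    (hB : ∀ a < m, B (a + 1) = B a + x * (2 * (1 + Z + Zb) + B a + B m + G (a + 1)))
    (hT : T = 1 + Z + Zb + B m + G m + H) :
    T * (1 - x) * ((1 - x) ^ (m + 1) + (1 - x) ^ m - 1) = (1 + x) * (1 - x * (1 - x) ^ m) := by
  have hW : (1 - x) * (1 + Z + Zb) = 1 + x + x * B m := by linear_combination hZ + hZb
  have hT' : (1 - x) * T = (1 + x) * (1 + B m) := by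
    linear_combination (1 - x) * hT + hW + hH + hG m
  have hgeom : x * ∑ j ∈ Finset.range m, (1 - x) ^ j = 1 - (1 - x) ^ m := by
    linear_combination -(geom_sum_mul (1 - x) m)
  -- the factor `1 + x` is kept on both sides: it need not be cancellable in `R`
  have hBm : (1 + x) * ((1 - x) ^ (m + 1) * B m) = (1 + x) * ((2 + B m) * (1 - (1 - x) ^ m)) := by
    linear_combination (1 - x) * one_add_mul_one_sub_pow_mul_eq_mul_geom_sum hB0 hG hB m le_rfl +
      2 * x * (∑ j ∈ Finset.range m, (1 - x) ^ j) * hW + (1 + x) * (2 + B m) * hgeom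
  linear_combination ((1 - x) ^ (m + 1) + (1 - x) ^ m - 1) * hT' + hBm

end TransferEquations

local notation "x₀" => ((0 : ℕ), true)

/-- `x_a^ε x₀^k x_b^δ`, with `a, b ≥ 1`, is forbidden by one of the rules (2)–(5);
`δ = true` stands for the exponent `+1`. -/
def Clash (a k b : ℕ) : Bool → Prop
  | true => b < a ∨ a ≤ b ∧ 1 ≤ k
  | false => b < a ∧ 1 ≤ k ∨ a ≤ b ∧ 2 ≤ k

theorem not_forbidden_nil (p : ℕ) : ¬ Forbidden p [] := by
  simp [Forbidden]

theorem forbidden_append_singleton_iff {p : ℕ} {v : List (ℕ × Bool)} {x : ℕ × Bool} :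
    Forbidden p (v ++ [x]) ↔
      (∃ i ε, i ≤ p - 1 ∧ v = [(i, ε)] ∧ x = (i, !ε)) ∨
      ∃ a ε k b δ, 1 ≤ a ∧ a ≤ p - 1 ∧ 1 ≤ b ∧ b ≤ p - 1 ∧
        v = (a, ε) :: List.replicate k x₀ ∧ x = (b, δ) ∧ Clash a k b δ := by
  have split (y : ℕ × Bool) (k : ℕ) (z : ℕ × Bool) :
      v ++ [x] = y :: (List.replicate k x₀ ++ [z]) ↔ v = y :: List.replicate k x₀ ∧ x = z := by
    rw [← List.cons_append, List.append_singleton_inj]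
  have pair (i : ℕ) (ε : Bool) : v ++ [x] = [(i, ε), (i, !ε)] ↔ v = [(i, ε)] ∧ x = (i, !ε) :=
    List.append_singleton_inj (bs := [(i, ε)])
  simp only [Forbidden, split, pair]
  constructor
  · rintro (⟨i, ε, hi, rfl, rfl⟩ | ⟨a, b, k, ε, hb, hba, ha, rfl, rfl⟩ |
      ⟨a, b, k, ε, hb, hba, ha, rfl, rfl⟩ | ⟨a, b, k, ε, ha, hab, hb, rfl, rfl⟩ |
      ⟨a, b, k, ε, ha, hab, hb, rfl, rfl⟩)
    · exact .inl ⟨i, ε, hi, rfl, rfl⟩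
    · exact .inr ⟨a, ε, k, b, true, by omega, ha, hb, by omega, rfl, rfl, .inl hba⟩
    · exact .inr ⟨a, ε, k + 1, b, false, by omega, ha, hb, by omega, rfl, rfl, .inl ⟨hba, by omega⟩⟩
    · exact .inr ⟨a, ε, k + 1, b, true, ha, by omega, by omega, hb, rfl, rfl, .inr ⟨hab, by omega⟩⟩
    · exact .inr ⟨a, ε, k + 2, b, false, ha, by omega, by omega, hb, rfl, rfl, .inr ⟨hab, by omega⟩⟩
  · rintro (⟨i, ε, hi, rfl, rfl⟩ | ⟨a, ε, k, b, δ, ha, hap, hb, hbp, rfl, rfl, hclash⟩)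
    · exact .inl ⟨i, ε, hi, rfl, rfl⟩
    right
    cases δ with
    | true =>
      rcases hclash with hba | ⟨hab, hk⟩
      · exact .inl ⟨a, b, k, ε, hb, hba, hap, rfl, rfl⟩
      · obtain ⟨k, rfl⟩ : ∃ j, k = j + 1 := ⟨k - 1, by omega⟩
        exact .inr (.inr (.inl ⟨a, b, k, ε, ha, hab, hbp, rfl, rfl⟩))
    | false =>
      rcases hclash with ⟨hba, hk⟩ | ⟨hab, hk⟩
      · obtain ⟨k, rfl⟩ : ∃ j, k = j + 1 := ⟨k - 1, by omega⟩
        exact .inr (.inl ⟨a, b, k, ε, hb, hba, hap, rfl, rfl⟩)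
      · obtain ⟨k, rfl⟩ : ∃ j, k = j + 2 := ⟨k - 2, by omega⟩
        exact .inr (.inr (.inr ⟨a, b, k, ε, ha, hab, hbp, rfl, rfl⟩))

abbrev Ending := Option (ℕ × Bool) × ℕ

namespace Ending

def push : Ending → ℕ × Bool → Ending
  | (o, k), (0, true) => (o, k + 1)
  | _, y => (some y, 0)

@[simp] theorem push_x₀ (e : Ending) : e.push x₀ = (e.1, e.2 + 1) := rfl

@[simp] theorem push_of_ne {y : ℕ × Bool} (hy : y ≠ x₀) (e : Ending) : e.push y = (some y, 0) := by
  obtain ⟨_ | i, _ | _⟩ := y <;> first | rfl | exact absurd rfl hy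

def last (e : Ending) : Option (ℕ × Bool) := if e.2 = 0 then e.1 else some x₀

end Ending

/-- The last letter of `w` other than `x₀`, if any, and the number of letters `x₀` after it. -/
def ending (w : List (ℕ × Bool)) : Ending := w.foldl Ending.push (none, 0)

@[simp] theorem ending_nil : ending [] = (none, 0) := rfl

@[simp] theorem ending_append_singleton (w : List (ℕ × Bool)) (x : ℕ × Bool) :
    ending (w ++ [x]) = (ending w).push x := by
  simp [ending]

theorem ending_append_cons_replicate (s : List (ℕ × Bool)) {y : ℕ × Bool} (hy : y ≠ x₀) (k : ℕ) :
    ending (s ++ y :: List.replicate k x₀) = (some y, k) := by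
  induction k with
  | zero => simpa using Ending.push_of_ne hy (ending s)
  | succ k ih => rw [List.replicate_succ', ← List.cons_append, ← List.append_assoc,
      ending_append_singleton, ih, Ending.push_x₀]

theorem exists_eq_append_of_ending_eq {w : List (ℕ × Bool)} {y : ℕ × Bool} {k : ℕ}
    (h : ending w = (some y, k)) : ∃ s, w = s ++ y :: List.replicate k x₀ := by
  induction w using List.reverseRecOn generalizing k with
  | nil => simp at h
  | append_singleton w x ih =>
    by_cases hx : x = x₀
    · subst hx
      obtain ⟨k, rfl⟩ : ∃ j, k = j + 1 := ⟨k - 1, by simp at h; omega⟩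
      obtain ⟨s, rfl⟩ := ih (by simp at h; exact Prod.ext h.1 h.2)
      exact ⟨s, by simp [List.replicate_succ']⟩
    · simp only [ending_append_singleton, Ending.push_of_ne hx, Prod.mk.injEq,
        Option.some.injEq] at h
      obtain ⟨rfl, rfl⟩ := h
      exact ⟨w, rfl⟩

theorem getLast?_eq_last_ending (w : List (ℕ × Bool)) : w.getLast? = (ending w).last := by
  induction w using List.reverseRecOn with
  | nil => rfl
  | append_singleton w x _ =>
    by_cases hx : x = x₀
    · subst hx; simp [Ending.last]
    · simp [Ending.last, hx]

/-- Appending `x` to a word with ending `e` creates a forbidden subword. -/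
def Blocks (e : Ending) (x : ℕ × Bool) : Prop :=
  e.last = some (x.1, !x.2) ∨ ∃ a ε, e.1 = some (a, ε) ∧ 1 ≤ a ∧ 1 ≤ x.1 ∧ Clash a e.2 x.1 x.2

theorem exists_forbidden_suffix_iff {p : ℕ} {w : List (ℕ × Bool)} {x : ℕ × Bool}
    (hw : ∀ y ∈ w, y.1 ≤ p - 1) (hx : x.1 ≤ p - 1) :
    (∃ v, v <:+ w ∧ Forbidden p (v ++ [x])) ↔ Blocks (ending w) x := by
  simp only [forbidden_append_singleton_iff, Blocks, ← getLast?_eq_last_ending,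
    ← List.singleton_suffix_iff_getLast?_eq_some]
  constructor
  · rintro ⟨v, hv, ⟨i, ε, -, rfl, rfl⟩ | ⟨a, ε, k, b, δ, ha, -, hb, -, rfl, rfl, hclash⟩⟩
    · exact .inl (by simpa using hv)
    · obtain ⟨s, rfl⟩ := hv
      rw [ending_append_cons_replicate s (by rw [Ne, Prod.mk.injEq]; omega)]
      exact .inr ⟨a, ε, rfl, ha, hb, hclash⟩
  · rintro (hv | ⟨a, ε, he, ha, hb, hclash⟩)
    · exact ⟨_, hv, .inl ⟨x.1, !x.2, hx, rfl, by simp⟩⟩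
    · obtain ⟨s, hs⟩ := exists_eq_append_of_ending_eq (Prod.ext he rfl)
      have hap : a ≤ p - 1 := hw (a, ε) (by rw [hs]; simp)
      exact ⟨_, ⟨s, hs.symm⟩, .inr ⟨a, ε, _, x.1, x.2, ha, hap, hb, hx, rfl, rfl, hclash⟩⟩

theorem nfin_nil (p : ℕ) : NFin p [] :=
  ⟨by simp, fun u hu => by rw [List.infix_nil.1 hu]; exact not_forbidden_nil p⟩

theorem nfin_append_singleton_iff {p : ℕ} {w : List (ℕ × Bool)} {x : ℕ × Bool} :
    NFin p (w ++ [x]) ↔ NFin p w ∧ x.1 ≤ p - 1 ∧ ¬ Blocks (ending w) x := by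
  have h : NFin p (w ++ [x]) ↔
      NFin p w ∧ x.1 ≤ p - 1 ∧ ¬ ∃ v, v <:+ w ∧ Forbidden p (v ++ [x]) := by
    simp only [NFin, List.mem_append, List.mem_singleton, or_imp, forall_and, forall_eq,
      List.infix_concat_iff, List.suffix_concat_iff, not_forbidden_nil, not_false_eq_true,
      true_and, not_exists, not_and, forall_exists_index, and_imp]
    constructor
    · rintro ⟨⟨hw, hx⟩, hv, hu⟩
      exact ⟨⟨hw, hu⟩, hx, fun v hvw => hv _ v rfl hvw⟩
    · rintro ⟨⟨hw, hu⟩, hx, hv⟩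
      exact ⟨⟨hw, hx⟩, by rintro _ v rfl; exact hv v, hu⟩
  rw [h]
  exact and_congr_right fun hw => and_congr_right fun hx =>
    (exists_forbidden_suffix_iff hw.1 hx).not

def Admissible (p : ℕ) (e : Ending) : Prop :=
  e.1 = none ∨ e = (some (0, false), 0) ∨ ∃ a ε, e.1 = some (a, ε) ∧ 1 ≤ a ∧ a ≤ p - 1

theorem admissible_ending {p : ℕ} {w : List (ℕ × Bool)} (hw : NFin p w) :
    Admissible p (ending w) := by
  induction w using List.reverseRecOn with
  | nil => exact .inl rfl
  | append_singleton w x ih =>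
    obtain ⟨hw', hx, hblock⟩ := nfin_append_singleton_iff.1 hw
    rw [ending_append_singleton]
    by_cases hx₀ : x = x₀
    · subst hx₀
      rcases ih hw' with h | h | ⟨a, ε, h, ha, hap⟩
      · exact .inl h
      · exact absurd (.inl (by simp [h, Ending.last])) hblock
      · exact .inr (.inr ⟨a, ε, h, ha, hap⟩)
    · rw [Ending.push_of_ne hx₀]
      obtain ⟨_ | a, ε⟩ := x
      · obtain rfl : ε = false := by simpa using hx₀
        exact .inr (.inl rfl)
      · exact .inr (.inr ⟨a + 1, ε, rfl, by omega, hx⟩)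

def alphabet (p : ℕ) : Finset (ℕ × Bool) := Finset.Iic (p - 1) ×ˢ Finset.univ

theorem x₀_mem_alphabet (p : ℕ) : x₀ ∈ alphabet p := by simp [alphabet]

def words (p : ℕ) : ℕ → Finset (List (ℕ × Bool))
  | 0 => {[]}
  | n + 1 => (words p n ×ˢ alphabet p).image fun q => q.1 ++ [q.2]

theorem mem_words {p n : ℕ} {w : List (ℕ × Bool)} :
    w ∈ words p n ↔ w.length = n ∧ ∀ y ∈ w, y.1 ≤ p - 1 := by
  induction n generalizing w with
  | zero => simp +contextual [words]
  | succ n ih =>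
    rcases List.eq_nil_or_concat' w with rfl | ⟨v, x, rfl⟩
    · simp [words]
    · simp [words, alphabet, ih, or_imp, forall_and, and_assoc]

section Counting

open scoped Classical

noncomputable def tally (p n : ℕ) (f : Ending → ℚ) : ℚ :=
  ∑ w ∈ words p n with NFin p w, f (ending w)

noncomputable def transfer (p : ℕ) (f : Ending → ℚ) (e : Ending) : ℚ :=
  ∑ x ∈ alphabet p, if Blocks e x then 0 else f (e.push x)

theorem tally_zero (p : ℕ) (f : Ending → ℚ) : tally p 0 f = f (none, 0) := by
  simp [tally, words, Finset.filter_singleton, nfin_nil]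

theorem tally_succ (p n : ℕ) (f : Ending → ℚ) :
    tally p (n + 1) f = tally p n (transfer p f) := by
  have hinj : Set.InjOn (fun q : List (ℕ × Bool) × (ℕ × Bool) => q.1 ++ [q.2])
      ↑(words p n ×ˢ alphabet p) :=
    fun q _ q' _ h => Prod.ext (List.append_singleton_inj.1 h).1 (List.append_singleton_inj.1 h).2
  rw [tally, words, Finset.sum_filter, Finset.sum_image hinj, Finset.sum_product, tally,
    Finset.sum_filter]
  refine Finset.sum_congr rfl fun w _ => ?_
  by_cases hw : NFin p w
  · simp only [transfer, hw, if_true]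
    refine Finset.sum_congr rfl fun x hx => ?_
    have hx : x.1 ≤ p - 1 := by simpa [alphabet] using hx
    have key : NFin p (w ++ [x]) ↔ ¬ Blocks (ending w) x := by
      rw [nfin_append_singleton_iff]; simp [hw, hx]
    by_cases hb : Blocks (ending w) x
    · rw [if_neg (fun h => key.1 h hb), if_pos hb]
    · rw [if_pos (key.2 hb), if_neg hb, ending_append_singleton]
  · simp [nfin_append_singleton_iff, hw]

theorem natCard_eq_tally_one (p n : ℕ) :
    (Nat.card {w : List (ℕ × Bool) // w.length = n ∧ NFin p w} : ℚ) = tally p n 1 := by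
  have e : {w : List (ℕ × Bool) // w.length = n ∧ NFin p w} ≃
      {w // w ∈ {w ∈ words p n | NFin p w}} :=
    Equiv.subtypeEquivRight fun w => by
      rw [Finset.mem_filter, mem_words]
      exact ⟨fun h => ⟨⟨h.1, h.2.1⟩, h.2⟩, fun h => ⟨h.1.1, h.2⟩⟩
  rw [Nat.card_congr e, Nat.card_eq_finsetCard, tally, Finset.card_eq_sum_ones]
  push_cast
  rfl

theorem transfer_eq_sum_of_subset {p : ℕ} {f : Ending → ℚ} {s : Finset (ℕ × Bool)}
    (hs : s ⊆ alphabet p) (hf : ∀ x ∉ s, ∀ e : Ending, f (e.push x) = 0) (e : Ending) :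
    transfer p f e = ∑ x ∈ s, if Blocks e x then 0 else f (e.push x) := by
  refine (Finset.sum_subset hs fun x _ hx => ?_).symm
  simp [hf x hx]

noncomputable def gf (p : ℕ) : (Ending → ℚ) →ₗ[ℚ] ℚ⟦X⟧ where
  toFun f := mk fun n => tally p n f
  map_add' f g := by ext n; simp [tally, Finset.sum_add_distrib]
  map_smul' c f := by ext n; simp [tally, Finset.mul_sum]

@[simp] theorem coeff_gf (p n : ℕ) (f : Ending → ℚ) : coeff n (gf p f) = tally p n f := by
  simp [gf]

theorem gf_eq_C_add_X_mul (p : ℕ) (f : Ending → ℚ) :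
    gf p f = C (f (none, 0)) + X * gf p (transfer p f) := by
  ext (_ | n) <;> simp [tally_zero, tally_succ, coeff_succ_X_mul]

theorem gf_congr {p : ℕ} {f g : Ending → ℚ} (h : Set.EqOn f g {e | Admissible p e}) :
    gf p f = gf p g := by
  ext n
  simp only [coeff_gf, tally]
  exact Finset.sum_congr rfl fun w hw => h (admissible_ending (Finset.mem_filter.1 hw).2)

theorem gf_eq_X_mul_of_eqOn {p : ℕ} {f g : Ending → ℚ} (h0 : f (none, 0) = 0)
    (h : Set.EqOn (transfer p f) g {e | Admissible p e}) : gf p f = X * gf p g := by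
  rw [gf_eq_C_add_X_mul, h0, map_zero, zero_add, gf_congr h]

def emptyEndings : Set Ending := {(none, 0)}

def zeroEndings : Set Ending := {e | e.1 = none ∧ 1 ≤ e.2}

def invEndings : Set Ending := {(some (0, false), 0)}

def genEndings (c : ℕ) (K : Set ℕ) : Set Ending :=
  {e | (∃ a, e.1.map Prod.fst = some a ∧ 1 ≤ a ∧ a ≤ c) ∧ e.2 ∈ K}

def letterEndings (a : ℕ) : Set Ending := {e | e.1.map Prod.fst = some a ∧ e.2 = 0}

@[simp] theorem mem_genEndings {c : ℕ} {K : Set ℕ} {e : Ending} :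
    e ∈ genEndings c K ↔ (∃ a, e.1.map Prod.fst = some a ∧ 1 ≤ a ∧ a ≤ c) ∧ e.2 ∈ K := Iff.rfl

@[simp] theorem mem_letterEndings {a : ℕ} {e : Ending} :
    e ∈ letterEndings a ↔ e.1.map Prod.fst = some a ∧ e.2 = 0 := Iff.rfl

theorem genEndings_zero (K : Set ℕ) : genEndings 0 K = ∅ := by
  ext e; simp

theorem indicator_genEndings_succ (a : ℕ) :
    (genEndings (a + 1) {0}).indicator (1 : Ending → ℚ) =
      (genEndings a {0}).indicator 1 + (letterEndings (a + 1)).indicator 1 := by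
  ext ⟨_ | ⟨b, ε⟩, k⟩
  · simp
  · simp only [Pi.add_apply, Set.indicator_apply, mem_genEndings, mem_letterEndings,
      Option.map_some, Option.some.injEq, exists_eq_left', Set.mem_singleton_iff]
    split_ifs <;> first | omega | norm_num

theorem one_eqOn_sum_indicator (p : ℕ) :
    Set.EqOn (1 : Ending → ℚ)
      (emptyEndings.indicator 1 + zeroEndings.indicator 1 + invEndings.indicator 1 +
        (genEndings (p - 1) {0}).indicator 1 + (genEndings (p - 1) {1}).indicator 1 +
        (genEndings (p - 1) {k | 2 ≤ k}).indicator 1)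
      {e | Admissible p e} := by
  rintro ⟨o, k⟩ he
  simp only [Pi.add_apply]
  rcases he with rfl | h | ⟨b, ε, rfl, hb, hbp⟩
  · cases k <;> simp [emptyEndings, zeroEndings, invEndings]
  · obtain ⟨rfl, rfl⟩ := Prod.mk.inj h
    simp [emptyEndings, zeroEndings, invEndings]
  · rcases k with _ | _ | k <;>
      simp [emptyEndings, zeroEndings, invEndings, hb, hbp, show b ≠ 0 by omega]

theorem transfer_emptyEndings (p : ℕ) : transfer p (emptyEndings.indicator 1) = 0 := by
  ext e
  refine Finset.sum_eq_zero fun x _ => ?_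
  by_cases hx : x = x₀ <;> simp [hx, emptyEndings]

theorem transfer_zeroEndings (p : ℕ) :
    transfer p (zeroEndings.indicator 1) = emptyEndings.indicator 1 + zeroEndings.indicator 1 := by
  ext e
  rw [Pi.add_apply, transfer_eq_sum_of_subset (s := {x₀}) (by simp [x₀_mem_alphabet])
    (fun x hx e => by simp at hx; simp [hx, zeroEndings]), Finset.sum_singleton, Ending.push_x₀]
  obtain ⟨_ | y, _ | k⟩ := e <;> simp [Blocks, Ending.last, zeroEndings, emptyEndings]

theorem transfer_invEndings (p : ℕ) :
    Set.EqOn (transfer p (invEndings.indicator 1))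
      (emptyEndings.indicator 1 + invEndings.indicator 1 + (genEndings (p - 1) {0}).indicator 1)
      {e | Admissible p e} := by
  rintro ⟨o, k⟩ he
  rw [Pi.add_apply, Pi.add_apply, transfer_eq_sum_of_subset (s := {(0, false)})
    (by simp [alphabet]) (fun x hx e => by by_cases h : x = x₀ <;> simp_all [invEndings]),
    Finset.sum_singleton, Ending.push_of_ne (by simp)]
  rcases he with rfl | h | ⟨a, ε, rfl, ha, hap⟩
  · cases k <;> simp [Blocks, Ending.last, invEndings, emptyEndings]
  · obtain ⟨rfl, rfl⟩ := Prod.mk.inj h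
    simp [Blocks, Ending.last, invEndings, emptyEndings]
  · cases k <;> simp [Blocks, Ending.last, invEndings, emptyEndings, ha, hap, show a ≠ 0 by omega]

theorem transfer_genEndings_one (p c : ℕ) :
    transfer p ((genEndings c {1}).indicator 1) = (genEndings c {0}).indicator 1 := by
  ext e
  rw [transfer_eq_sum_of_subset (s := {x₀}) (by simp [x₀_mem_alphabet])
    (fun x hx e => by simp at hx; simp [hx]), Finset.sum_singleton, Ending.push_x₀]
  obtain ⟨_ | ⟨_ | a, _ | _⟩, _ | k⟩ := e <;> simp [Blocks, Ending.last, Set.indicator_apply]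

theorem transfer_genEndings_two_le (p c : ℕ) :
    transfer p ((genEndings c {k | 2 ≤ k}).indicator 1) =
      (genEndings c {1}).indicator 1 + (genEndings c {k | 2 ≤ k}).indicator 1 := by
  ext e
  rw [Pi.add_apply, transfer_eq_sum_of_subset (s := {x₀}) (by simp [x₀_mem_alphabet])
    (fun x hx e => by simp at hx; simp [hx]), Finset.sum_singleton, Ending.push_x₀]
  obtain ⟨_ | ⟨_ | a, _ | _⟩, _ | _ | k⟩ := e <;> simp [Blocks, Ending.last, Set.indicator_apply]

theorem transfer_letterEndings {p a : ℕ} (ha : 1 ≤ a) (hap : a ≤ p - 1) :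
    Set.EqOn (transfer p ((letterEndings a).indicator 1))
      ((2 : ℚ) • (emptyEndings.indicator 1 + zeroEndings.indicator 1 + invEndings.indicator 1) +
        (genEndings (a - 1) {0}).indicator 1 + (genEndings (p - 1) {0}).indicator 1 +
        (genEndings a {1}).indicator 1)
      {e | Admissible p e} := by
  rintro ⟨o, k⟩ he
  simp only [Pi.add_apply, Pi.smul_apply, smul_eq_mul]
  rw [transfer_eq_sum_of_subset (s := {(a, true), (a, false)})
    (by simp [Finset.insert_subset_iff, alphabet, hap])
    (fun x hx e => by
      by_cases h : x = x₀
      · simp [h]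
      · obtain ⟨i, δ⟩ := x; cases δ <;> simp_all),
    Finset.sum_pair (by simp), Ending.push_of_ne (y := (a, true)) (by simp; omega),
    Ending.push_of_ne (y := (a, false)) (by simp)]
  rcases he with rfl | h | ⟨b, ε, rfl, hb, hbp⟩
  · cases k <;> simp [Blocks, Ending.last, invEndings, emptyEndings, zeroEndings,
      show 0 ≠ a by omega] <;> norm_num
  · obtain ⟨rfl, rfl⟩ := Prod.mk.inj h
    simp [Blocks, Ending.last, invEndings, emptyEndings, zeroEndings, show 0 ≠ a by omega]
    norm_num
  · rcases k with _ | _ | k <;> cases ε <;>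
      simp [Blocks, Ending.last, invEndings, emptyEndings, zeroEndings, Set.indicator_apply, Clash,
        show b ≠ 0 by omega] <;>
      split_ifs <;> first | omega | norm_num

end Counting

theorem gf_emptyEndings (p : ℕ) : gf p (emptyEndings.indicator 1) = 1 := by
  rw [gf_eq_C_add_X_mul, transfer_emptyEndings, map_zero, mul_zero, add_zero]
  simp [emptyEndings]

theorem gf_zeroEndings (p : ℕ) :
    gf p (zeroEndings.indicator 1) = X * (1 + gf p (zeroEndings.indicator 1)) := by
  refine (gf_eq_X_mul_of_eqOn (by simp [zeroEndings])
    fun e _ => congrFun (transfer_zeroEndings p) e).trans ?_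
  rw [map_add, gf_emptyEndings]

theorem gf_invEndings (p : ℕ) :
    gf p (invEndings.indicator 1) = X * (1 + gf p (invEndings.indicator 1) +
      gf p ((genEndings (p - 1) {0}).indicator 1)) := by
  refine (gf_eq_X_mul_of_eqOn (by simp [invEndings]) (transfer_invEndings p)).trans ?_
  rw [map_add, map_add, gf_emptyEndings]

theorem gf_genEndings_one (p c : ℕ) :
    gf p ((genEndings c {1}).indicator 1) = X * gf p ((genEndings c {0}).indicator 1) :=
  gf_eq_X_mul_of_eqOn (by simp) fun e _ => congrFun (transfer_genEndings_one p c) e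

theorem gf_genEndings_two_le (p c : ℕ) :
    gf p ((genEndings c {k | 2 ≤ k}).indicator 1) = X * (gf p ((genEndings c {1}).indicator 1) +
      gf p ((genEndings c {k | 2 ≤ k}).indicator 1)) := by
  refine (gf_eq_X_mul_of_eqOn (by simp)
    fun e _ => congrFun (transfer_genEndings_two_le p c) e).trans ?_
  rw [map_add]

theorem gf_genEndings_succ {p a : ℕ} (ha : a + 1 ≤ p - 1) :
    gf p ((genEndings (a + 1) {0}).indicator 1) = gf p ((genEndings a {0}).indicator 1) +
      X * (2 * (1 + gf p (zeroEndings.indicator 1) + gf p (invEndings.indicator 1)) +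
        gf p ((genEndings a {0}).indicator 1) + gf p ((genEndings (p - 1) {0}).indicator 1) +
        gf p ((genEndings (a + 1) {1}).indicator 1)) := by
  rw [indicator_genEndings_succ, map_add,
    gf_eq_X_mul_of_eqOn (f := (letterEndings (a + 1)).indicator 1) (by simp)
      (transfer_letterEndings (by omega) ha)]
  simp only [map_add, gf_emptyEndings, Nat.add_sub_cancel, two_smul, two_mul]

theorem gf_one (p : ℕ) :
    gf p 1 = 1 + gf p (zeroEndings.indicator 1) + gf p (invEndings.indicator 1) +
      gf p ((genEndings (p - 1) {0}).indicator 1) + gf p ((genEndings (p - 1) {1}).indicator 1) +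
      gf p ((genEndings (p - 1) {k | 2 ≤ k}).indicator 1) := by
  rw [gf_congr (one_eqOn_sum_indicator p)]
  simp only [map_add, gf_emptyEndings]

/-- Formula (20): the generating function `Φ_p(t) = ∑ a_n tⁿ` counting words
of length `n` in `N_fin(p)` satisfies
`Φ_p(t)(1 − t)((1 − t)^p + (1 − t)^{p−1} − 1) = (1 + t)(1 − t(1 − t)^{p−1})`. -/
theorem stmt16 (p : ℕ) (hp : 2 ≤ p) :
    (PowerSeries.mk fun n =>
        ((Nat.card {w : List (ℕ × Bool) // w.length = n ∧ NFin p w} : ℚ))) *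
        (1 - X) * ((1 - X) ^ p + (1 - X) ^ (p - 1) - 1) =
      (1 + X) * (1 - X * (1 - X) ^ (p - 1)) := by
  have hcount : (PowerSeries.mk fun n =>
      ((Nat.card {w : List (ℕ × Bool) // w.length = n ∧ NFin p w} : ℚ))) = gf p 1 := by
    ext n
    rw [coeff_mk, natCard_eq_tally_one, coeff_gf]
  rw [hcount, show (1 - X : ℚ⟦X⟧) ^ p = (1 - X) ^ (p - 1 + 1) by congr 1; omega]
  exact transfer_equations_solution (gf_zeroEndings p) (gf_invEndings p) (gf_genEndings_one p)
    (gf_genEndings_two_le p _) (by rw [genEndings_zero, Set.indicator_empty', map_zero])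
    (fun _ _ => gf_genEndings_succ (by omega)) (gf_one p)
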